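/- arXiv:1807.02889 — 3 statements merged into one kernel-verified Lean document; each statement's English description precedes it below -/
import Mathlib

section
/- The polynomial P_{−Size_2(Y)}(ζ) = Σ_{σ : α(σ) = −Size_2(Y)} p^{[σ]}(ζ) is not identically zero and has degree exactly N − 2; in particular, −Size_2(Y) = −2·diam Y is a frequency of the modified characteristic determinant D(ζ) = (−4π)^N det Γ_{a,Y}(iζ). -/
/-!
Only transpositions move exactly two points, so `Size₂(Y)` is twice the diameter. Every `σ`
with `α(σ) = -2 diam Y < 0` moves at least two points, hence `deg p^{[σ]} ≤ N - 2`, with equality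
exactly for transpositions. The coefficient of `ζ^{N-2}` in `P_{-Size₂(Y)}` is therefore
`(-1)^{N-1}` times a sum of the positive numbers `K₁(σ)` over the diametral transpositions,
and there is at least one of those.
-/

open Complex Real Filter Topology

noncomputable section

abbrev Pt := EuclideanSpace ℝ (Fin 3)

/-- Diameter of the tuple `Y`. -/
def diamY {N : ℕ} (Y : Fin N → Pt) : ℝ :=
  ⨆ p : Fin N × Fin N, dist (Y p.1) (Y p.2)

/-- Number of non-fixed points of a permutation. -/
def movedCard {N : ℕ} (σ : Equiv.Perm (Fin N)) : ℕ :=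
  (Finset.univ.filter fun j => σ j ≠ j).card

/-- The `m`-size of `Y`. -/
def SizeM {N : ℕ} (Y : Fin N → Pt) (m : ℕ) : ℝ :=
  if m = 1 then diamY Y
  else ⨆ σ : {σ : Equiv.Perm (Fin N) // movedCard σ = m}, ∑ j, dist (Y j) (Y (σ.1 j))

/-- The frequency `α(σ)`. -/
def alphaY {N : ℕ} (Y : Fin N → Pt) (σ : Equiv.Perm (Fin N)) : ℝ :=
  -∑ j ∈ Finset.univ.filter fun j => σ j ≠ j, dist (Y j) (Y (σ j))

/-- The constant `K₁(σ)`. -/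
def K1 {N : ℕ} (Y : Fin N → Pt) (σ : Equiv.Perm (Fin N)) : ℝ :=
  ∏ j ∈ Finset.univ.filter fun j => σ j ≠ j, (dist (Y j) (Y (σ j)))⁻¹

/-- The polynomial `p^{[σ]}`. -/
def pPoly {N : ℕ} (Y : Fin N → Pt) (a : Fin N → ℂ) (σ : Equiv.Perm (Fin N)) : Polynomial ℂ :=
  Polynomial.C (((Equiv.Perm.sign σ : ℤ) : ℂ) * (K1 Y σ : ℂ)) *
    ∏ j ∈ Finset.univ.filter fun j => σ j = j,
      (-Polynomial.X - Polynomial.C (4 * (π : ℂ) * a j))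

open scoped Classical in
/-- The polynomial `P_b`. -/
def Pb {N : ℕ} (Y : Fin N → Pt) (a : Fin N → ℂ) (b : ℝ) : Polynomial ℂ :=
  ∑ σ ∈ Finset.univ.filter fun σ => alphaY Y σ = b, pPoly Y a σ

open scoped Classical in
/-- The regularized Green function kernel. -/
def Gtil (z : ℂ) (x : Pt) : ℂ :=
  if x = 0 then 0 else Complex.exp (Complex.I * z * ‖x‖) / (4 * (π : ℂ) * ‖x‖)

/-- The characteristic matrix `Γ_{a,Y}(z)`. -/
def GammaM {N : ℕ} (a : Fin N → ℂ) (Y : Fin N → Pt) (z : ℂ) : Matrix (Fin N) (Fin N) ℂ :=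
  Matrix.of fun j j' =>
    (if j = j' then a j - Complex.I * z / (4 * (π : ℂ)) else 0) - Gtil z (Y j - Y j')

/-- The characteristic determinant. -/
def detGamma {N : ℕ} (a : Fin N → ℂ) (Y : Fin N → Pt) (z : ℂ) : ℂ :=
  (GammaM a Y z).det

open scoped Classical in
/-- The order of `z` as a zero of `f`. -/
def zeroOrder (f : ℂ → ℂ) (z : ℂ) : ℕ :=
  if h : AnalyticAt ℂ f z then (analyticOrderAt f z).toNat else 0

/-- Number of zeros of `f` in `S`, counted with multiplicities. -/
def countZeros (f : ℂ → ℂ) (S : Set ℂ) : ℝ :=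
  ∑' k : ℂ, S.indicator (fun k => (zeroOrder f k : ℝ)) k

/-- The logarithmic-strip counting function `N^log(μ, R)`. -/
def NlogCount (f : ℂ → ℂ) (μ R : ℝ) : ℝ :=
  countZeros f {k | -μ * Real.log (|k.re| + 1) ≤ k.im ∧ ‖k‖ ≤ R}

/-- The counting function `N(R)`. -/
def NCount (f : ℂ → ℂ) (R : ℝ) : ℝ :=
  countZeros f {k | ‖k‖ ≤ R}

open Finset Polynomial

section Polynomial

variable {R ι : Type*} [CommRing R] [IsDomain R] (s : Finset ι) (c : ι → R)

lemma natDegree_prod_neg_X_sub_C : (∏ i ∈ s, (-X - C (c i))).natDegree = #s := by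
  have h : ∀ i, -X - C (c i) = -(X + C (c i)) := fun i => by ring
  rw [natDegree_prod _ _ fun i _ => by rw [h]; exact neg_ne_zero.2 (X_add_C_ne_zero _)]
  simp only [h, natDegree_neg, natDegree_X_add_C, sum_const, smul_eq_mul, mul_one]

lemma coeff_card_prod_neg_X_sub_C : (∏ i ∈ s, (-X - C (c i))).coeff #s = (-1) ^ #s := by
  have h : ∀ i, -X - C (c i) = -(X + C (c i)) := fun i => by ring
  have hlead := coeff_natDegree (p := ∏ i ∈ s, (-X - C (c i)))
  rw [natDegree_prod_neg_X_sub_C, leadingCoeff_prod] at hlead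
  simpa only [h, leadingCoeff_neg, leadingCoeff_X_add_C, prod_const] using hlead

end Polynomial

section Permutations

variable {N : ℕ} (Y : Fin N → Pt)

lemma movedCard_eq_card_support (σ : Equiv.Perm (Fin N)) : movedCard σ = #σ.support := rfl

lemma movedCard_le (σ : Equiv.Perm (Fin N)) : movedCard σ ≤ N :=
  (card_le_univ _).trans_eq (Fintype.card_fin N)

lemma card_filter_apply_eq_self (σ : Equiv.Perm (Fin N)) :
    #(univ.filter fun j => σ j = j) = N - movedCard σ := by
  have h := card_filter_add_card_filter_not (s := univ) (fun j => σ j = j)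
  rw [card_univ, Fintype.card_fin] at h
  have : movedCard σ = #(univ.filter fun j => ¬σ j = j) := rfl
  omega

lemma two_le_movedCard_of_alphaY_ne_zero {σ : Equiv.Perm (Fin N)} (h : alphaY Y σ ≠ 0) :
    2 ≤ movedCard σ :=
  Equiv.Perm.two_le_card_support_of_ne_one fun hσ => h (by simp [alphaY, hσ])

lemma alphaY_swap {i j : Fin N} (hij : i ≠ j) :
    alphaY Y (Equiv.swap i j) = -(2 * dist (Y i) (Y j)) := by
  have hsupp : (univ.filter fun k => Equiv.swap i j k ≠ k) = {i, j} :=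
    Equiv.Perm.support_swap hij
  rw [alphaY, hsupp, sum_pair hij, Equiv.swap_apply_left, Equiv.swap_apply_right,
    dist_comm (Y j), two_mul]

lemma sum_dist_apply_eq_neg_alphaY (σ : Equiv.Perm (Fin N)) :
    ∑ j, dist (Y j) (Y (σ j)) = -alphaY Y σ := by
  rw [alphaY, neg_neg, sum_filter]
  exact sum_congr rfl fun j _ => by split_ifs <;> simp_all

lemma K1_pos (hY : Function.Injective Y) (σ : Equiv.Perm (Fin N)) : 0 < K1 Y σ :=
  prod_pos fun _ hj => inv_pos.2 <| dist_pos.2 fun h => (mem_filter.1 hj).2 (hY h).symm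

end Permutations

section Size

variable {N : ℕ} (Y : Fin N → Pt)

lemma dist_le_diamY (i j : Fin N) : dist (Y i) (Y j) ≤ diamY Y :=
  le_ciSup (f := fun p : Fin N × Fin N => dist (Y p.1) (Y p.2)) (Finite.bddAbove_range _) (i, j)

lemma exists_dist_eq_diamY (hN : 0 < N) : ∃ i j, dist (Y i) (Y j) = diamY Y := by
  have : Nonempty (Fin N) := ⟨⟨0, hN⟩⟩
  obtain ⟨p, hp⟩ := Finite.exists_max fun p : Fin N × Fin N => dist (Y p.1) (Y p.2)
  exact ⟨p.1, p.2, le_antisymm (dist_le_diamY Y _ _) (ciSup_le hp)⟩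

lemma diamY_pos (hN : 2 ≤ N) (hY : Function.Injective Y) : 0 < diamY Y :=
  (dist_pos.2 fun h => absurd (hY h) (by simp [Fin.ext_iff])).trans_le
    (dist_le_diamY Y ⟨0, by omega⟩ ⟨1, by omega⟩)

lemma sizeM_two_eq_iSup_isSwap :
    SizeM Y 2 = ⨆ σ : {σ : Equiv.Perm (Fin N) // σ.IsSwap}, -alphaY Y σ := by
  simp only [SizeM, OfNat.ofNat_ne_one, if_false, sum_dist_apply_eq_neg_alphaY]
  exact (Equiv.subtypeEquivRight fun σ => Equiv.Perm.card_support_eq_two).iSup_congr fun _ => rfl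

lemma two_mul_dist_le_sizeM_two {i j : Fin N} (hij : i ≠ j) :
    2 * dist (Y i) (Y j) ≤ SizeM Y 2 := by
  rw [sizeM_two_eq_iSup_isSwap, ← neg_neg (2 * _), ← alphaY_swap Y hij]
  exact le_ciSup (f := fun σ : {σ : Equiv.Perm (Fin N) // σ.IsSwap} => -alphaY Y σ)
    (Finite.bddAbove_range _) ⟨_, i, j, hij, rfl⟩

lemma sizeM_two (hN : 2 ≤ N) : SizeM Y 2 = 2 * diamY Y := by
  have h01 : (⟨0, by omega⟩ : Fin N) ≠ ⟨1, by omega⟩ := by simp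
  apply le_antisymm
  · have : Nonempty {σ : Equiv.Perm (Fin N) // σ.IsSwap} := ⟨⟨_, _, _, h01, rfl⟩⟩
    rw [sizeM_two_eq_iSup_isSwap]
    refine ciSup_le ?_
    rintro ⟨_, i, j, hij, rfl⟩
    rw [alphaY_swap Y hij, neg_neg]
    gcongr
    exact dist_le_diamY Y i j
  · obtain ⟨i, j, hdiam⟩ := exists_dist_eq_diamY Y (by omega)
    rw [← hdiam]
    rcases eq_or_ne i j with rfl | hij
    · rw [dist_self, mul_zero]
      exact (by positivity : (0 : ℝ) ≤ 2 * dist _ _).trans (two_mul_dist_le_sizeM_two Y h01)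
    · exact two_mul_dist_le_sizeM_two Y hij

end Size

section FrequencyPolynomial

variable {N : ℕ} (Y : Fin N → Pt) (a : Fin N → ℂ)

lemma natDegree_pPoly_le (σ : Equiv.Perm (Fin N)) :
    (pPoly Y a σ).natDegree ≤ N - movedCard σ :=
  (natDegree_C_mul_le _ _).trans <|
    (natDegree_prod_neg_X_sub_C _ _).trans_le (card_filter_apply_eq_self σ).le

lemma coeff_pPoly_swap {i j : Fin N} (hij : i ≠ j) :
    (pPoly Y a (Equiv.swap i j)).coeff (N - 2) = -((-1) ^ (N - 2) * K1 Y (Equiv.swap i j)) := by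
  have hfix := card_filter_apply_eq_self (Equiv.swap i j)
  rw [movedCard_eq_card_support, Equiv.Perm.card_support_swap hij] at hfix
  rw [pPoly, coeff_C_mul, ← hfix, coeff_card_prod_neg_X_sub_C, Equiv.Perm.sign_swap hij]
  push_cast
  ring

variable {Y} {b : ℝ}

lemma natDegree_Pb_le (hb : b ≠ 0) : (Pb Y a b).natDegree ≤ N - 2 := by
  refine natDegree_sum_le_of_forall_le _ _ fun σ hσ => (natDegree_pPoly_le Y a σ).trans ?_
  have := two_le_movedCard_of_alphaY_ne_zero Y ((mem_filter.1 hσ).2 ▸ hb)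
  omega

open scoped Classical in
lemma coeff_Pb_eq_sum_isSwap (hb : b ≠ 0) :
    (Pb Y a b).coeff (N - 2) = -(-1) ^ (N - 2) *
      ((∑ σ ∈ univ.filter fun σ => alphaY Y σ = b ∧ σ.IsSwap, K1 Y σ : ℝ) : ℂ) := by
  have hvanish : ∀ σ ∈ univ.filter fun σ => alphaY Y σ = b,
      (pPoly Y a σ).coeff (N - 2) ≠ 0 → σ.IsSwap := by
    intro σ hσ hc
    by_contra hns
    have h2 := two_le_movedCard_of_alphaY_ne_zero Y ((mem_filter.1 hσ).2 ▸ hb)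
    have h3 : movedCard σ ≠ 2 := fun h => hns (Equiv.Perm.card_support_eq_two.1 h)
    have hN := movedCard_le σ
    exact hc <| coeff_eq_zero_of_natDegree_lt <| (natDegree_pPoly_le Y a σ).trans_lt (by omega)
  rw [Pb, finsetSum_coeff, ← sum_filter_of_ne hvanish, filter_filter, ofReal_sum, mul_sum]
  refine sum_congr rfl fun σ hσ => ?_
  obtain ⟨i, j, hij, rfl⟩ := (mem_filter.1 hσ).2.2
  rw [coeff_pPoly_swap Y a hij]
  ring

lemma coeff_Pb_ne_zero (hY : Function.Injective Y) (hb : b ≠ 0) {i j : Fin N} (hij : i ≠ j)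
    (hα : alphaY Y (Equiv.swap i j) = b) : (Pb Y a b).coeff (N - 2) ≠ 0 := by
  classical
  rw [coeff_Pb_eq_sum_isSwap a hb]
  refine mul_ne_zero (neg_ne_zero.2 (pow_ne_zero _ (by norm_num))) (ofReal_ne_zero.2 ?_)
  exact (sum_pos (fun σ _ => K1_pos Y hY σ) ⟨_, mem_filter.2 ⟨mem_univ _, hα, i, j, hij, rfl⟩⟩).ne'

end FrequencyPolynomial

/-- `P_{−Size₂(Y)}` is not identically zero and has degree exactly `N − 2`;
in particular `−Size₂(Y) = −2 diam Y` is a frequency of `D`. -/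
theorem statement0 {N : ℕ} (hN : 2 ≤ N) (Y : Fin N → Pt) (hY : Function.Injective Y)
    (a : Fin N → ℂ) :
    Pb Y a (-(SizeM Y 2)) ≠ 0 ∧ (Pb Y a (-(SizeM Y 2))).natDegree = N - 2 ∧
      SizeM Y 2 = 2 * diamY Y := by
  have hS2 := sizeM_two Y hN
  have hdiam := diamY_pos Y hN hY
  obtain ⟨i, j, hij⟩ := exists_dist_eq_diamY Y (by omega)
  have hne : i ≠ j := by
    rintro rfl
    exact hdiam.ne (by rw [← hij, dist_self])
  have hb : -SizeM Y 2 ≠ 0 := by rw [hS2]; linarith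
  have hc := coeff_Pb_ne_zero a hY hb hne (by rw [alphaY_swap Y hne, hS2, hij])
  exact ⟨fun h => hc (by rw [h, coeff_zero]),
    (natDegree_Pb_le a hb).antisymm (le_natDegree_of_ne_zero hc), hS2⟩
end
end

section
/- Let N = 4, let a ∈ ℂ⁴, and let Y be the symmetric collinear configuration determined by c_1 > c_2 > 0 with c_1/c_2 = 3 + 2√2 and a unit vector e ∈ ℝ³. Then there exists ε > 0 such that for every 4-tuple Ỹ = (ỹ_1, …, ỹ_4) of pairwise distinct points of ℝ³ with (Σ_j |ỹ_j − y_j|²)^{1/2} < ε, at least one of the following two conditions fails for (a, Ỹ): (A3) for n = 3 and n = 4, the polynomial P̃_{−Size_n(Ỹ)} is not identically zero and has degree 4 − n; (A4) Size_2(Ỹ) − Size_1(Ỹ) > Size_3(Ỹ) − Size_2(Ỹ) > Size_4(Ỹ) − Size_3(Ỹ) > 0. -/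
open Complex Real Filter Topology

noncomputable section

/-- The symmetric collinear configuration `(−c₁e, −c₂e, c₂e, c₁e)`. -/
def symConf (c₁ c₂ : ℝ) (e : Pt) : Fin 4 → Pt :=
  ![(-c₁) • e, (-c₂) • e, c₂ • e, c₁ • e]

/-! Near the symmetric configuration, condition (A4) already fails: there `Size₂ = Size₃ = 4c₁`
while `Size₄ = 4(c₁ + c₂)`, and every `Size_m` (`m ≥ 2`) moves by at most twice the total
displacement of the points, so `Size₃ - Size₂ ≈ 0` stays below `Size₄ - Size₃ ≈ 4c₂`. -/

theorem abs_le_sqrt_sum_sq {ι : Type*} [Fintype ι] (f : ι → ℝ) (i : ι) :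
    |f i| ≤ √(∑ j, f j ^ 2) :=
  Real.abs_le_sqrt (Finset.single_le_sum (f := fun j => f j ^ 2) (fun _ _ => sq_nonneg _)
    (Finset.mem_univ i))

theorem dist_smul_smul_of_norm_eq_one {E : Type*} [SeminormedAddCommGroup E] [NormedSpace ℝ E]
    {e : E} (he : ‖e‖ = 1) (s t : ℝ) : dist (s • e) (t • e) = |s - t| := by
  rw [dist_eq_norm, ← sub_smul, norm_smul, he, mul_one, Real.norm_eq_abs]

section PermutationSums

variable {ι α : Type*} [Fintype ι] [PseudoMetricSpace α]

theorem abs_sum_dist_perm_sub_le (Y Y' : ι → α) (σ : Equiv.Perm ι) :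
    |∑ j, dist (Y' j) (Y' (σ j)) - ∑ j, dist (Y j) (Y (σ j))| ≤ 2 * ∑ j, dist (Y' j) (Y j) :=
  calc |∑ j, dist (Y' j) (Y' (σ j)) - ∑ j, dist (Y j) (Y (σ j))|
      ≤ ∑ j, |dist (Y' j) (Y' (σ j)) - dist (Y j) (Y (σ j))| := by
        rw [← Finset.sum_sub_distrib]
        exact Finset.abs_sum_le_sum_abs _ _
    _ ≤ ∑ j, (dist (Y' j) (Y j) + dist (Y' (σ j)) (Y (σ j))) :=
        Finset.sum_le_sum fun j _ => dist_dist_dist_le (Y' j) (Y' (σ j)) (Y j) (Y (σ j))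
    _ = 2 * ∑ j, dist (Y' j) (Y j) := by
        rw [Finset.sum_add_distrib, Equiv.sum_comp σ fun j => dist (Y' j) (Y j)]
        ring

end PermutationSums

section Sizes

variable {N : ℕ}

theorem SizeM_nonneg (Y : Fin N → Pt) (m : ℕ) : 0 ≤ SizeM Y m := by
  unfold SizeM diamY
  split_ifs
  · exact Real.iSup_nonneg fun _ => dist_nonneg
  · exact Real.iSup_nonneg fun _ => Finset.sum_nonneg fun _ _ => dist_nonneg

theorem sum_dist_perm_le_SizeM (Y : Fin N → Pt) {m : ℕ} (hm : m ≠ 1) (σ : Equiv.Perm (Fin N))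
    (hσ : movedCard σ = m) : ∑ j, dist (Y j) (Y (σ j)) ≤ SizeM Y m := by
  rw [SizeM, if_neg hm]
  exact le_ciSup (f := fun σ : {σ : Equiv.Perm (Fin N) // movedCard σ = m} =>
    ∑ j, dist (Y j) (Y (σ.1 j))) (Set.finite_range _).bddAbove ⟨σ, hσ⟩

theorem SizeM_le_of_forall_sum_dist_perm_le (Y : Fin N → Pt) {m : ℕ} (hm : m ≠ 1) {r : ℝ}
    (hr : 0 ≤ r) (h : ∀ σ : Equiv.Perm (Fin N), movedCard σ = m → ∑ j, dist (Y j) (Y (σ j)) ≤ r) :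
    SizeM Y m ≤ r := by
  rw [SizeM, if_neg hm]
  exact Real.iSup_le (fun σ => h σ.1 σ.2) hr

theorem SizeM_le_SizeM_add (Y Y' : Fin N → Pt) {m : ℕ} (hm : m ≠ 1) :
    SizeM Y' m ≤ SizeM Y m + 2 * ∑ j, dist (Y' j) (Y j) := by
  have hD : 0 ≤ ∑ j, dist (Y' j) (Y j) := Finset.sum_nonneg fun _ _ => dist_nonneg
  refine SizeM_le_of_forall_sum_dist_perm_le Y' hm (by linarith [SizeM_nonneg Y m]) fun σ hσ => ?_
  linarith [abs_le.1 (abs_sum_dist_perm_sub_le Y Y' σ), sum_dist_perm_le_SizeM Y hm σ hσ]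

theorem abs_SizeM_sub_SizeM_le (Y Y' : Fin N → Pt) {m : ℕ} (hm : m ≠ 1) :
    |SizeM Y' m - SizeM Y m| ≤ 2 * ∑ j, dist (Y' j) (Y j) := by
  have h := SizeM_le_SizeM_add Y' Y hm
  simp only [dist_comm (Y _)] at h
  exact abs_sub_le_iff.2 ⟨by linarith [SizeM_le_SizeM_add Y Y' hm], by linarith⟩

end Sizes

section SymmetricConfiguration

variable {c₁ c₂ : ℝ} {e : Pt}

def symConfDist (c₁ c₂ : ℝ) : Fin 4 → Fin 4 → ℝ :=
  ![![0, c₁ - c₂, c₁ + c₂, 2 * c₁],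
    ![c₁ - c₂, 0, 2 * c₂, c₁ + c₂],
    ![c₁ + c₂, 2 * c₂, 0, c₁ - c₂],
    ![2 * c₁, c₁ + c₂, c₁ - c₂, 0]]

theorem dist_symConf (hc : c₂ < c₁) (hc₂ : 0 < c₂) (he : ‖e‖ = 1) (i j : Fin 4) :
    dist (symConf c₁ c₂ e i) (symConf c₁ c₂ e j) = symConfDist c₁ c₂ i j := by
  fin_cases i <;> fin_cases j <;>
    simp only [symConf, symConfDist, dist_smul_smul_of_norm_eq_one he, Fin.zero_eta, Fin.mk_one,
      Fin.reduceFinMk, Matrix.cons_val] <;>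
    rw [abs_eq (by linarith)] <;> first | (left; ring1) | (right; ring1)

theorem movedCard_eq_three_iff_tuple (σ : Equiv.Perm (Fin 4)) :
    movedCard σ = 3 ↔
      (σ 0, σ 1, σ 2, σ 3) ∈ [(1, 2, 0, 3), (2, 0, 1, 3), (1, 3, 2, 0), (3, 0, 2, 1),
        (2, 1, 3, 0), (3, 1, 0, 2), (0, 2, 3, 1), (0, 3, 1, 2)] := by
  revert σ; decide

theorem SizeM_symConf_three_le (hc : c₂ < c₁) (hc₂ : 0 < c₂) (he : ‖e‖ = 1) :
    SizeM (symConf c₁ c₂ e) 3 ≤ 4 * c₁ := by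
  refine SizeM_le_of_forall_sum_dist_perm_le _ (by norm_num) (by linarith) fun σ hσ => ?_
  simp only [movedCard_eq_three_iff_tuple, List.mem_cons, List.not_mem_nil, or_false] at hσ
  rcases hσ with h | h | h | h | h | h | h | h <;>
    simp only [Prod.ext_iff] at h <;>
    simp only [Fin.sum_univ_four, h, dist_symConf hc hc₂ he, symConfDist, Matrix.cons_val] <;>
    linarith

theorem le_SizeM_symConf_two (hc : c₂ < c₁) (hc₂ : 0 < c₂) (he : ‖e‖ = 1) :
    4 * c₁ ≤ SizeM (symConf c₁ c₂ e) 2 := by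
  refine le_of_eq_of_le ?_ (sum_dist_perm_le_SizeM _ (by norm_num) (Equiv.swap 0 3) (by decide))
  simp only [Fin.sum_univ_four, Equiv.swap_apply_left, Equiv.swap_apply_right,
    Equiv.swap_apply_of_ne_of_ne, ne_eq, Fin.reduceEq, not_false_eq_true, dist_symConf hc hc₂ he,
    symConfDist, Matrix.cons_val, add_zero]
  ring

theorem le_SizeM_symConf_four (hc : c₂ < c₁) (hc₂ : 0 < c₂) (he : ‖e‖ = 1) :
    4 * c₁ + 4 * c₂ ≤ SizeM (symConf c₁ c₂ e) 4 := by
  refine le_of_eq_of_le ?_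
    (sum_dist_perm_le_SizeM _ (by norm_num) (Equiv.swap 0 3 * Equiv.swap 1 2) (by decide))
  simp only [Fin.sum_univ_four, Equiv.Perm.mul_apply, Equiv.swap_apply_left,
    Equiv.swap_apply_right, Equiv.swap_apply_of_ne_of_ne, ne_eq, Fin.reduceEq, not_false_eq_true,
    dist_symConf hc hc₂ he, symConfDist, Matrix.cons_val]
  ring

end SymmetricConfiguration

theorem statement14_general (c₁ c₂ : ℝ) (hc : c₂ < c₁) (hc₂ : 0 < c₂)
    (e : Pt) (he : ‖e‖ = 1) (a : Fin 4 → ℂ) :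
    ∃ ε : ℝ, 0 < ε ∧
      ∀ Yt : Fin 4 → Pt, Function.Injective Yt →
        Real.sqrt (∑ j, dist (Yt j) (symConf c₁ c₂ e j) ^ 2) < ε →
        ¬ ((∀ n : ℕ, 3 ≤ n → n ≤ 4 →
              Pb Yt a (-(SizeM Yt n)) ≠ 0 ∧ (Pb Yt a (-(SizeM Yt n))).natDegree = 4 - n) ∧
           (SizeM Yt 2 - SizeM Yt 1 > SizeM Yt 3 - SizeM Yt 2 ∧
            SizeM Yt 3 - SizeM Yt 2 > SizeM Yt 4 - SizeM Yt 3 ∧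
            SizeM Yt 4 - SizeM Yt 3 > 0)) := by
  refine ⟨c₂ / 8, by positivity, fun Yt _ hclose ⟨_, _, hA4, _⟩ => ?_⟩
  set Y := symConf c₁ c₂ e
  have hD : ∑ j, dist (Yt j) (Y j) < c₂ / 2 := by
    have h : ∀ j, dist (Yt j) (Y j) < c₂ / 8 := fun j =>
      ((le_abs_self _).trans (abs_le_sqrt_sum_sq (fun j => dist (Yt j) (Y j)) j)).trans_lt hclose
    linarith [Fin.sum_univ_four fun j => dist (Yt j) (Y j), h 0, h 1, h 2, h 3]
  have h2 := abs_le.1 (abs_SizeM_sub_SizeM_le Y Yt (m := 2) (by norm_num))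
  have h3 := abs_le.1 (abs_SizeM_sub_SizeM_le Y Yt (m := 3) (by norm_num))
  have h4 := abs_le.1 (abs_SizeM_sub_SizeM_le Y Yt (m := 4) (by norm_num))
  linarith [SizeM_symConf_three_le hc hc₂ he, le_SizeM_symConf_two hc hc₂ he,
    le_SizeM_symConf_four hc hc₂ he]

/-- near the symmetric collinear configuration with `c₁/c₂ = 3 + 2√2`,
conditions (A3)–(A4) cannot both hold. -/
theorem statement14 (c₁ c₂ : ℝ) (hc : c₂ < c₁) (hc₂ : 0 < c₂)
    (hratio : c₁ / c₂ = 3 + 2 * Real.sqrt 2) (e : Pt) (he : ‖e‖ = 1) (a : Fin 4 → ℂ) :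
    ∃ ε : ℝ, 0 < ε ∧
      ∀ Yt : Fin 4 → Pt, Function.Injective Yt →
        Real.sqrt (∑ j, dist (Yt j) (symConf c₁ c₂ e j) ^ 2) < ε →
        ¬ ((∀ n : ℕ, 3 ≤ n → n ≤ 4 →
              Pb Yt a (-(SizeM Yt n)) ≠ 0 ∧ (Pb Yt a (-(SizeM Yt n))).natDegree = 4 - n) ∧
           (SizeM Yt 2 - SizeM Yt 1 > SizeM Yt 3 - SizeM Yt 2 ∧
            SizeM Yt 3 - SizeM Yt 2 > SizeM Yt 4 - SizeM Yt 3 ∧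
            SizeM Yt 4 - SizeM Yt 3 > 0)) :=
  statement14_general c₁ c₂ hc hc₂ e he a
end
end

section
/- Let ν ≥ 1 be an integer, let b_0 < b_1 < … < b_ν be real numbers, and let C_0, …, C_ν be nonzero complex numbers. Then the entire function F(z) = Σ_{l=0}^{ν} C_l e^{i b_l z} is not identically zero, has infinitely many zeros, and its zeros have positive asymptotic linear density: there exist c > 0 and R_0 > 0 such that for every R ≥ R_0 the number of zeros of F in the closed disk {|z| ≤ R} (counted with multiplicities) is at least cR. -/
/-!
On the half-planes `Im z ≥ A` and `Im z ≤ -A` a single extreme term of `F` dominates. If `F` had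
no zero, Liouville's theorem would force `|F|` to get arbitrarily small on the strip in between;
by compactness of the torus orbit `t ↦ (e^{i b_l t})_l`, a limit `Σ C_l u_l e^{i b_l z}` of
translates of `F` then vanishes, and Hurwitz's theorem returns a zero of `F`. Hurwitz's theorem
along the relatively dense almost periods of `F` puts a zero within bounded distance of every
real number, hence at least `cR` zeros in the disk of radius `R`.
-/

open Complex Real Filter Topology

noncomputable section

open Metric Set Function

section Entire

variable {f : ℂ → ℂ}

theorem Differentiable.analyticOrderAt_ne_top (hf : Differentiable ℂ f) (hf₀ : f ≠ 0) (z : ℂ) :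
    analyticOrderAt f z ≠ ⊤ := fun h =>
  hf₀ <| (analyticOnNhd_univ_iff_differentiable.mpr hf).eq_of_eventuallyEq
    analyticOnNhd_const (analyticOrderAt_eq_top.mp h)

theorem one_le_zeroOrder (hf : Differentiable ℂ f) (hf₀ : f ≠ 0) {z : ℂ} (hz : f z = 0) :
    1 ≤ zeroOrder f z := by
  rw [zeroOrder, dif_pos (hf.analyticAt z), Nat.one_le_iff_ne_zero, Ne, ENat.toNat_eq_zero,
    not_or]
  exact ⟨(hf.analyticAt z).analyticOrderAt_ne_zero.mpr hz, hf.analyticOrderAt_ne_top hf₀ z⟩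

theorem zeroOrder_eq_zero {z : ℂ} (hz : f z ≠ 0) : zeroOrder f z = 0 := by
  unfold zeroOrder
  split_ifs with hf
  · rw [hf.analyticOrderAt_eq_zero.mpr hz, ENat.toNat_zero]
  · rfl

theorem card_le_countZeros (hf : Differentiable ℂ f) (hf₀ : f ≠ 0) {S : Set ℂ} (hS : IsCompact S)
    {s : Finset ℂ} (hs : ∀ z ∈ s, z ∈ S ∧ f z = 0) : (s.card : ℝ) ≤ countZeros f S := by
  have hzeros : (S \ {z | f z ≠ 0}).Finite := by
    refine hS.finite_sdiff_of_mem_codiscreteWithin (codiscreteWithin_mono (subset_univ S) ?_)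
    refine (analyticOnNhd_univ_iff_differentiable.mpr hf
      |>.eqOn_zero_or_eventually_ne_zero_of_preconnected isPreconnected_univ).resolve_left ?_
    exact fun h => hf₀ (funext fun z => h (mem_univ z))
  have hsum : Summable (S.indicator fun k => (zeroOrder f k : ℝ)) := by
    refine summable_of_ne_finset_zero (s := hzeros.toFinset) fun z hz => ?_
    rw [Finite.mem_toFinset, Set.mem_sdiff, mem_ofPred_eq, not_and, not_not] at hz
    by_cases hzS : z ∈ S
    · rw [indicator_of_mem hzS, zeroOrder_eq_zero (hz hzS), Nat.cast_zero]
    · exact indicator_of_notMem hzS _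
  calc (s.card : ℝ) = ∑ z ∈ s, 1 := by simp
    _ ≤ ∑ z ∈ s, S.indicator (fun k => (zeroOrder f k : ℝ)) z := by
      refine Finset.sum_le_sum fun z hz => ?_
      rw [indicator_of_mem (hs z hz).1, Nat.one_le_cast]
      exact one_le_zeroOrder hf hf₀ (hs z hz).2
    _ ≤ countZeros f S :=
      hsum.sum_le_tsum s fun z _ => indicator_nonneg (fun _ _ => Nat.cast_nonneg _) z

theorem Differentiable.exists_eq_zero_of_norm_lt_sphere (hf : Differentiable ℂ f) {c : ℂ} {r : ℝ}
    (hr : 0 < r) (h : ∀ w ∈ sphere c r, ‖f c‖ < ‖f w‖) : ∃ z ∈ closedBall c r, f z = 0 := by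
  obtain ⟨z, hz, hmin⟩ := exists_isLocalMin_mem_ball hf.continuous.norm.continuousOn
    (mem_closedBall_self hr.le) h
  refine ⟨z, ball_subset_closedBall hz, ?_⟩
  refine (eventually_eq_or_eq_zero_of_isLocalMin_norm (.of_forall hf) hmin).resolve_left
    fun hconst => ?_
  have hf_const : f = fun _ => f z := analyticOnNhd_univ_iff_differentiable.mpr hf
    |>.eq_of_eventuallyEq analyticOnNhd_const hconst
  obtain ⟨w, hw⟩ := NormedSpace.sphere_nonempty (x := c).mpr hr.le
  exact (h w hw).ne (by rw [hf_const])

theorem Differentiable.exists_eq_zero_of_norm_sub_lt (hf : Differentiable ℂ f) (hf₀ : f ≠ 0)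
    {w : ℂ} (hw : f w = 0) : ∃ r > 0, ∃ δ > 0, ∀ g : ℂ → ℂ, Differentiable ℂ g →
      (∀ z ∈ closedBall w r, ‖g z - f z‖ < δ) → ∃ z ∈ closedBall w r, g z = 0 := by
  obtain ⟨ρ, hρ, hne⟩ : ∃ ρ > 0, ∀ z ∈ ball w ρ, z ≠ w → f z ≠ 0 := by
    refine Metric.eventually_nhds_iff_ball.mp (eventually_nhdsWithin_iff.mp ?_)
    refine (hf.analyticAt w).eventually_eq_zero_or_eventually_ne_zero.resolve_left fun h => ?_
    exact hf.analyticOrderAt_ne_top hf₀ w (analyticOrderAt_eq_top.mpr h)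
  have hr : 0 < ρ / 2 := half_pos hρ
  have hsphere : ∀ z ∈ sphere w (ρ / 2), f z ≠ 0 := fun z hz =>
    hne z (by rw [mem_ball, mem_sphere.mp hz]; linarith) (ne_of_mem_sphere hz hr.ne')
  obtain ⟨z₀, hz₀, hmin⟩ := (isCompact_sphere w (ρ / 2)).exists_isMinOn
    (NormedSpace.sphere_nonempty.mpr hr.le) hf.continuous.norm.continuousOn
  have hm : 0 < ‖f z₀‖ := norm_pos_iff.mpr (hsphere z₀ hz₀)
  refine ⟨ρ / 2, hr, ‖f z₀‖ / 2, half_pos hm, fun g hg hgf => ?_⟩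
  refine hg.exists_eq_zero_of_norm_lt_sphere hr fun z hz => ?_
  have hcenter := hgf w (mem_closedBall_self hr.le)
  rw [hw, sub_zero] at hcenter
  have hz' := hgf z (sphere_subset_closedBall hz)
  linarith [isMinOn_iff.mp hmin z hz, norm_sub_norm_le (f z) (g z), norm_sub_rev (g z) (f z)]

end Entire

section ExpSum

variable {ι : Type*}

def expSum [Fintype ι] (b : ι → ℝ) (D : ι → ℂ) (z : ℂ) : ℂ :=
  ∑ l, D l * cexp (I * b l * z)

def phase (b : ι → ℝ) (t : ℝ) : ι → ℂ :=
  fun l => cexp (I * b l * t)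

theorem norm_cexp_I_mul (β : ℝ) (z : ℂ) : ‖cexp (I * β * z)‖ = rexp (-(β * z.im)) := by
  rw [Complex.norm_exp]
  simp [Complex.mul_re, Complex.mul_im]

theorem norm_phase_apply (b : ι → ℝ) (t : ℝ) (l : ι) : ‖phase b t l‖ = 1 := by
  simp [phase, norm_cexp_I_mul]

theorem phase_add (b : ι → ℝ) (s t : ℝ) : phase b (s + t) = phase b s * phase b t := by
  ext l
  simp [phase, mul_add, Complex.exp_add]

theorem phase_zero (b : ι → ℝ) : phase b 0 = 1 := by
  ext l
  simp [phase]

theorem norm_apply_eq_one_of_mem_closure_range_phase (b : ι → ℝ) {u : ι → ℂ}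
    (hu : u ∈ closure (range (phase b))) (l : ι) : ‖u l‖ = 1 := by
  refine closure_minimal (t := {v : ι → ℂ | ‖v l‖ = 1}) ?_
    (isClosed_eq (by fun_prop) continuous_const) hu
  rintro _ ⟨t, rfl⟩
  exact norm_phase_apply b t l

variable [Fintype ι]

theorem differentiable_expSum (b : ι → ℝ) (D : ι → ℂ) : Differentiable ℂ (expSum b D) := by
  unfold expSum
  fun_prop

theorem expSum_add_ofReal (b : ι → ℝ) (D : ι → ℂ) (z : ℂ) (t : ℝ) :
    expSum b D (z + t) = expSum b (D * phase b t) z := by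
  simp only [expSum, phase, Pi.mul_apply, mul_add, Complex.exp_add]
  exact Finset.sum_congr rfl fun l _ => by ring

theorem expSum_mul_phase_re_mul_I (b : ι → ℝ) (D : ι → ℂ) (z : ℂ) :
    expSum b (D * phase b z.re) (z.im * I) = expSum b D z := by
  rw [← expSum_add_ofReal, add_comm (z.im * I : ℂ), re_add_im]

theorem expSum_neg (b : ι → ℝ) (D : ι → ℂ) (z : ℂ) : expSum b D (-z) = expSum (-b) D z := by
  simp [expSum]

theorem expSum_sub (b : ι → ℝ) (D D' : ι → ℂ) (z : ℂ) :
    expSum b D z - expSum b D' z = expSum b (D - D') z := by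
  simp only [expSum, ← Finset.sum_sub_distrib, Pi.sub_apply, sub_mul]

theorem norm_expSum_le (b : ι → ℝ) (D : ι → ℂ) {z : ℂ} {Y : ℝ} (hz : |z.im| ≤ Y) :
    ‖expSum b D z‖ ≤ ‖D‖ * ∑ l, rexp (|b l| * Y) := by
  rw [Finset.mul_sum]
  refine (norm_sum_le _ _).trans (Finset.sum_le_sum fun l _ => ?_)
  rw [norm_mul, norm_cexp_I_mul]
  refine mul_le_mul (norm_le_pi_norm D l) (Real.exp_le_exp.mpr ?_) (by positivity) (by positivity)
  calc -(b l * z.im) ≤ |b l| * |z.im| := by rw [← abs_mul]; exact neg_le_abs _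
    _ ≤ |b l| * Y := by gcongr

theorem norm_phase_le_one (b : ι → ℝ) (t : ℝ) : ‖phase b t‖ ≤ 1 :=
  (pi_norm_le_iff_of_nonneg zero_le_one).mpr fun l => (norm_phase_apply b t l).le

theorem isCompact_closure_range_phase (b : ι → ℝ) : IsCompact (closure (range (phase b))) := by
  refine (isBounded_closedBall (x := 0) (r := 1)).subset ?_ |>.isCompact_closure
  rintro _ ⟨t, rfl⟩
  simpa using norm_phase_le_one b t

/-- The almost periods are relatively dense: cover the compact closure of the orbit `phase b ℝ` by
finitely many balls. -/
theorem exists_norm_phase_sub_one_lt (b : ι → ℝ) {ε : ℝ} (hε : 0 < ε) :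
    ∃ T > 0, ∀ s : ℝ, ∃ τ, |τ - s| ≤ T ∧ ‖phase b τ - 1‖ < ε := by
  obtain ⟨F, hF⟩ := (isCompact_closure_range_phase b).elim_finite_subcover
    (fun t => ball (phase b t) ε) (fun _ => isOpen_ball) fun v hv => by
      obtain ⟨t, ht⟩ := mem_closure_range_iff.mp hv ε hε
      exact mem_iUnion.mpr ⟨t, mem_ball.mpr ht⟩
  refine ⟨1 + ∑ t ∈ F, |t|, by positivity, fun s => ?_⟩
  obtain ⟨t, htF, hst⟩ := mem_iUnion₂.mp (hF (subset_closure (mem_range_self s)))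
  refine ⟨s - t, ?_, ?_⟩
  · rw [sub_sub_cancel_left, abs_neg]
    linarith [Finset.single_le_sum (fun t _ => abs_nonneg t) htF]
  · have hsplit : phase b (s - t) - 1 = phase b (-t) * (phase b s - phase b t) := by
      rw [sub_eq_neg_add s t, phase_add, mul_sub, ← phase_add b (-t) t, neg_add_cancel, phase_zero]
    rw [hsplit]
    calc _ ≤ ‖phase b (-t)‖ * ‖phase b s - phase b t‖ := norm_mul_le _ _
      _ ≤ 1 * ‖phase b s - phase b t‖ := by gcongr; exact norm_phase_le_one b _
      _ < ε := by rw [one_mul, ← dist_eq_norm]; exact hst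

theorem exists_norm_expSum_ge (b : ι → ℝ) (D : ι → ℂ) {l₀ : ι} (hD : D l₀ ≠ 0)
    (hl₀ : ∀ l ≠ l₀, b l₀ < b l) :
    ∃ A, ∀ z : ℂ, A ≤ z.im → ‖D l₀‖ / 2 * rexp (-(b l₀ * z.im)) ≤ ‖expSum b D z‖ := by
  classical
  set E := Finset.univ.erase l₀
  have hlim : Tendsto (fun y => ∑ l ∈ E, ‖D l‖ * rexp (-((b l - b l₀) * y))) atTop (𝓝 0) := by
    simpa using tendsto_finsetSum E fun l hl => ((Real.tendsto_exp_atBot.comp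
      (tendsto_neg_atTop_atBot.comp (tendsto_id.const_mul_atTop
        (sub_pos.mpr (hl₀ l (Finset.ne_of_mem_erase hl)))))).const_mul ‖D l‖)
  obtain ⟨A, hA⟩ := eventually_atTop.mp
    (hlim.eventually_lt_const (half_pos (norm_pos_iff.mpr hD)))
  refine ⟨A, fun z hz => ?_⟩
  have htail : ‖∑ l ∈ E, D l * cexp (I * b l * z)‖
      ≤ (∑ l ∈ E, ‖D l‖ * rexp (-((b l - b l₀) * z.im))) * rexp (-(b l₀ * z.im)) := by
    rw [Finset.sum_mul]
    refine (norm_sum_le _ _).trans (le_of_eq (Finset.sum_congr rfl fun l _ => ?_))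
    rw [norm_mul, norm_cexp_I_mul, mul_assoc, ← Real.exp_add]
    ring_nf
  have hhead : ‖D l₀ * cexp (I * b l₀ * z)‖ = ‖D l₀‖ * rexp (-(b l₀ * z.im)) := by
    rw [norm_mul, norm_cexp_I_mul]
  have hsplit : expSum b D z = D l₀ * cexp (I * b l₀ * z) + ∑ l ∈ E, D l * cexp (I * b l * z) :=
    (Finset.add_sum_erase _ _ (Finset.mem_univ l₀)).symm
  have htri := norm_sub_le (expSum b D z) (∑ l ∈ E, D l * cexp (I * b l * z))
  rw [hsplit, add_sub_cancel_right, hhead] at htri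
  rw [hsplit]
  nlinarith [mul_le_mul_of_nonneg_right (hA z.im hz).le (Real.exp_pos (-(b l₀ * z.im))).le]

theorem exists_expSum_eq_zero_mem_closedBall {b : ι → ℝ} {D u : ι → ℂ}
    (hne : expSum b (D * u) ≠ 0) {w : ℂ} (hw : expSum b (D * u) w = 0) :
    ∃ r > 0, ∃ ε > 0, ∀ t : ℝ, ‖phase b t - u‖ < ε →
      ∃ z ∈ closedBall (w + t) r, expSum b D z = 0 := by
  obtain ⟨r, hr, δ, hδ, H⟩ :=
    (differentiable_expSum b (D * u)).exists_eq_zero_of_norm_sub_lt hne hw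
  set M := ‖D‖ * ∑ l, rexp (|b l| * (|w.im| + r))
  have hM : 0 ≤ M := by positivity
  refine ⟨r, hr, δ / (M + 1), by positivity, fun t ht => ?_⟩
  have hclose : ∀ z ∈ closedBall w r, ‖expSum b D (z + t) - expSum b (D * u) z‖ < δ := by
    intro z hz
    have him : |z.im| ≤ |w.im| + r := by
      have h₁ := abs_im_le_norm (z - w)
      have h₂ := abs_sub_abs_le_abs_sub z.im w.im
      rw [← dist_eq_norm, sub_im] at h₁
      linarith [mem_closedBall.mp hz]
    rw [expSum_add_ofReal, expSum_sub, ← mul_sub]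
    calc _ ≤ ‖D * (phase b t - u)‖ * ∑ l, rexp (|b l| * (|w.im| + r)) := norm_expSum_le _ _ him
      _ ≤ M * ‖phase b t - u‖ := by rw [mul_right_comm]; gcongr; exact norm_mul_le _ _
      _ ≤ M * (δ / (M + 1)) := by gcongr
      _ < δ := by
        rw [mul_div_assoc', div_lt_iff₀ (by positivity)]
        nlinarith
  obtain ⟨z, hz, hz0⟩ := H (fun z => expSum b D (z + t))
    ((differentiable_expSum b D).comp (differentiable_id.add_const _)) hclose
  exact ⟨z + t, by rwa [mem_closedBall, dist_add_right], hz0⟩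

end ExpSum

section Ordered

variable {n : ℕ} {b : Fin (n + 1) → ℝ} {D : Fin (n + 1) → ℂ}

theorem exists_norm_expSum_ge_of_strictMono (hb : StrictMono b) (hD : ∀ l, D l ≠ 0) :
    ∃ A ≥ 0, ∀ z : ℂ,
      (A ≤ z.im → ‖D 0‖ / 2 * rexp (-(b 0 * z.im)) ≤ ‖expSum b D z‖) ∧
      (z.im ≤ -A →
        ‖D (Fin.last n)‖ / 2 * rexp (-(b (Fin.last n) * z.im)) ≤ ‖expSum b D z‖) := by
  obtain ⟨A₀, h₀⟩ := exists_norm_expSum_ge b D (hD 0) fun l hl => hb (Fin.pos_iff_ne_zero.mpr hl)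
  obtain ⟨A₁, h₁⟩ := exists_norm_expSum_ge (-b) D (hD (Fin.last n)) fun l hl =>
    neg_lt_neg (hb ((Fin.le_last l).lt_of_ne hl))
  refine ⟨max (max A₀ A₁) 0, le_max_right _ _, fun z => ⟨fun hz => h₀ z ?_, fun hz => ?_⟩⟩
  · linarith [le_max_left A₀ A₁, le_max_left (max A₀ A₁) 0]
  · simpa [expSum_neg] using h₁ (-z) (by
      simp only [neg_im]; linarith [le_max_right A₀ A₁, le_max_left (max A₀ A₁) 0])

theorem expSum_ne_zero (hb : StrictMono b) (hD : ∀ l, D l ≠ 0) : expSum b D ≠ 0 := by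
  obtain ⟨A, -, hA⟩ := exists_norm_expSum_ge_of_strictMono hb hD
  intro h
  have hpos : 0 < ‖D 0‖ / 2 * rexp (-(b 0 * (A * I).im)) :=
    mul_pos (half_pos (norm_pos_iff.mpr (hD 0))) (Real.exp_pos _)
  have := (hA (A * I)).1 (by simp)
  rw [h, Pi.zero_apply, norm_zero] at this
  linarith

theorem norm_cexp_div_expSum_le (hb : StrictMono b) (hD : ∀ l, D l ≠ 0) :
    ∃ A ≥ 0, ∀ z : ℂ,
      (A ≤ z.im → ‖cexp (I * b 0 * z) / expSum b D z‖ ≤ 2 / ‖D 0‖) ∧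
      (z.im ≤ -A → ‖cexp (I * b 0 * z) / expSum b D z‖
        ≤ 2 / ‖D (Fin.last n)‖ * rexp ((b (Fin.last n) - b 0) * z.im)) := by
  obtain ⟨A, hA0, hA⟩ := exists_norm_expSum_ge_of_strictMono hb hD
  have hD0 := norm_pos_iff.mpr (hD 0)
  have hDl := norm_pos_iff.mpr (hD (Fin.last n))
  refine ⟨A, hA0, fun z => ⟨fun hz => ?_, fun hz => ?_⟩⟩
  · have hF := (hA z).1 hz
    rw [norm_div, norm_cexp_I_mul, div_le_iff₀ (lt_of_lt_of_le (by positivity) hF)]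
    calc rexp (-(b 0 * z.im)) = 2 / ‖D 0‖ * (‖D 0‖ / 2 * rexp (-(b 0 * z.im))) := by
          field_simp
      _ ≤ _ := by gcongr
  · have hF := (hA z).2 hz
    rw [norm_div, norm_cexp_I_mul, div_le_iff₀ (lt_of_lt_of_le (by positivity) hF)]
    calc rexp (-(b 0 * z.im)) = 2 / ‖D (Fin.last n)‖ * rexp ((b (Fin.last n) - b 0) * z.im)
          * (‖D (Fin.last n)‖ / 2 * rexp (-(b (Fin.last n) * z.im))) := by
          field_simp
          rw [← Real.exp_add]
          ring_nf
      _ ≤ _ := by gcongr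

/-- Liouville's theorem applied to `e^{i b₀ z} / F(z)`, which is bounded when `F` has no zeros and
is bounded away from `0` on a horizontal strip, and which tends to `0` as `Im z → -∞`. -/
theorem exists_norm_expSum_lt_of_forall_ne_zero (hn : 0 < n) (hb : StrictMono b)
    (hD : ∀ l, D l ≠ 0) (hno : ∀ z, expSum b D z ≠ 0) :
    ∃ A, ∀ m > 0, ∃ z : ℂ, |z.im| ≤ A ∧ ‖expSum b D z‖ < m := by
  obtain ⟨A, hA0, hA⟩ := norm_cexp_div_expSum_le hb hD
  refine ⟨A, fun m hm => ?_⟩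
  by_contra! hlow
  set K : ℂ → ℂ := fun z => cexp (I * b 0 * z) / expSum b D z
  have hK : Differentiable ℂ K :=
    (by fun_prop : Differentiable ℂ fun z => cexp (I * b 0 * z)).div (differentiable_expSum b D) hno
  have hβ : 0 < b (Fin.last n) - b 0 := sub_pos.mpr (hb (Fin.lt_def.mpr (by simpa using hn)))
  have hbdd (z : ℂ) : ‖K z‖ ≤ 2 / ‖D 0‖ + 2 / ‖D (Fin.last n)‖ + rexp (|b 0| * A) / m := by
    have h₀ : 0 ≤ 2 / ‖D 0‖ := by positivity
    have h₁ : 0 ≤ 2 / ‖D (Fin.last n)‖ := by positivity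
    have h₂ : 0 ≤ rexp (|b 0| * A) / m := by positivity
    rcases le_or_gt A z.im with hz | hz
    · linarith [(hA z).1 hz]
    rcases le_or_gt z.im (-A) with hz' | hz'
    · suffices ‖K z‖ ≤ 2 / ‖D (Fin.last n)‖ by linarith
      refine ((hA z).2 hz').trans (mul_le_of_le_one_right h₁ (Real.exp_le_one_iff.mpr ?_))
      nlinarith
    · suffices ‖K z‖ ≤ rexp (|b 0| * A) / m by linarith
      have hstrip : |z.im| ≤ A := abs_le.mpr ⟨hz'.le, hz.le⟩
      rw [norm_div, norm_cexp_I_mul]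
      refine div_le_div₀ (Real.exp_pos _).le (Real.exp_le_exp.mpr ?_) hm (hlow z hstrip)
      calc -(b 0 * z.im) ≤ |b 0| * |z.im| := by rw [← abs_mul]; exact neg_le_abs _
        _ ≤ |b 0| * A := by gcongr
  have hconst (z : ℂ) : K z = K 0 := hK.apply_eq_apply_of_bounded
    (isBounded_iff_forall_norm_le.mpr ⟨_, forall_mem_range.mpr hbdd⟩) z 0
  have hdecay : Tendsto (fun y : ℝ => 2 / ‖D (Fin.last n)‖ * rexp ((b (Fin.last n) - b 0) * -y))
      atTop (𝓝 0) := by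
    simpa using (Real.tendsto_exp_atBot.comp
      (tendsto_neg_atTop_atBot.comp (tendsto_id.const_mul_atTop hβ))).const_mul _
  have hK0 : ‖K 0‖ ≤ 0 := by
    refine ge_of_tendsto hdecay (eventually_atTop.mpr ⟨A, fun y hy => ?_⟩)
    rw [← hconst (-y * I)]
    refine ((hA (-y * I)).2 (by simpa using hy)).trans_eq ?_
    simp
  exact div_ne_zero (Complex.exp_ne_zero _) (hno 0) (norm_le_zero_iff.mp hK0)

theorem exists_expSum_eq_zero (hn : 0 < n) (hb : StrictMono b) (hD : ∀ l, D l ≠ 0) :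
    ∃ z, expSum b D z = 0 := by
  by_contra! hno
  obtain ⟨A, hA⟩ := exists_norm_expSum_lt_of_forall_ne_zero hn hb hD hno
  set Φ : (Fin (n + 1) → ℂ) × ℝ → ℂ := fun p => expSum b (D * p.1) (p.2 * I)
  have hΦ : Continuous Φ := by
    simp only [Φ, expSum, Pi.mul_apply]
    fun_prop
  have hΦF (z : ℂ) : Φ (phase b z.re, z.im) = expSum b D z := expSum_mul_phase_re_mul_I b D z
  set S := closure (range (phase b)) ×ˢ Icc (-A) A
  obtain ⟨z₁, hz₁, -⟩ := hA 1 one_pos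
  have hmem (z : ℂ) (hz : |z.im| ≤ A) : (phase b z.re, z.im) ∈ S :=
    ⟨subset_closure (mem_range_self _), abs_le.mp hz⟩
  obtain ⟨⟨u, y⟩, ⟨hu, -⟩, hmin⟩ := ((isCompact_closure_range_phase b).prod
    isCompact_Icc).exists_isMinOn ⟨_, hmem z₁ hz₁⟩ hΦ.norm.continuousOn
  have hzero : Φ (u, y) = 0 := by
    by_contra h
    obtain ⟨z, hz, hlt⟩ := hA ‖Φ (u, y)‖ (norm_pos_iff.mpr h)
    have := isMinOn_iff.mp hmin _ (hmem z hz)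
    rw [hΦF] at this
    linarith
  have hDu : ∀ l, (D * u) l ≠ 0 := fun l =>
    mul_ne_zero (hD l) (norm_ne_zero_iff.mp
      (by rw [norm_apply_eq_one_of_mem_closure_range_phase b hu l]; exact one_ne_zero))
  obtain ⟨r, -, ε, hε, H⟩ := exists_expSum_eq_zero_mem_closedBall (expSum_ne_zero hb hDu) hzero
  obtain ⟨t, ht⟩ := mem_closure_range_iff.mp hu ε hε
  obtain ⟨z, -, hz⟩ := H t (by rwa [dist_comm, dist_eq_norm] at ht)
  exact hno z hz

theorem exists_expSum_eq_zero_near (hn : 0 < n) (hb : StrictMono b) (hD : ∀ l, D l ≠ 0) :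
    ∃ T > 0, ∀ s : ℝ, ∃ w, expSum b D w = 0 ∧ ‖w - s‖ ≤ T := by
  obtain ⟨w₀, hw₀⟩ := exists_expSum_eq_zero hn hb hD
  obtain ⟨r, hr, ε, hε, H⟩ := exists_expSum_eq_zero_mem_closedBall (u := 1)
    (by simpa using expSum_ne_zero hb hD) (by simpa using hw₀)
  obtain ⟨T, hT, hτ⟩ := exists_norm_phase_sub_one_lt b hε
  refine ⟨r + ‖w₀‖ + T, by positivity, fun s => ?_⟩
  obtain ⟨τ, hτs, hτ1⟩ := hτ s
  obtain ⟨w, hw, hw0⟩ := H τ hτ1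
  refine ⟨w, hw0, ?_⟩
  calc ‖w - s‖ = ‖(w - (w₀ + τ)) + w₀ + ((τ - s : ℝ) : ℂ)‖ := by push_cast; ring_nf
    _ ≤ ‖w - (w₀ + τ)‖ + ‖w₀‖ + ‖((τ - s : ℝ) : ℂ)‖ := norm_add₃_le
    _ ≤ r + ‖w₀‖ + T := by
      rw [norm_real, Real.norm_eq_abs, ← dist_eq_norm]
      gcongr
      exact mem_closedBall.mp hw

end Ordered

theorem exists_injective_norm_le_of_forall_exists_near {Z : Set ℂ} {T : ℝ} (hT : 0 < T)
    (hZ : ∀ s : ℝ, ∃ w ∈ Z, ‖w - s‖ ≤ T) :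
    ∃ w : ℕ → ℂ, Injective w ∧ (∀ k, w k ∈ Z) ∧ ∀ k, ‖w k‖ ≤ 3 * T * k + T := by
  choose w hwZ hw using fun k : ℕ => hZ (3 * T * k)
  have hgrid (k : ℕ) : ‖((3 * T * k : ℝ) : ℂ)‖ = 3 * T * k := by
    rw [norm_real, Real.norm_of_nonneg (by positivity)]
  refine ⟨w, fun j k hjk => ?_, hwZ, fun k => ?_⟩
  · have h : ‖((3 * T * j : ℝ) : ℂ) - (3 * T * k : ℝ)‖ ≤ T + T := by
      calc _ = ‖(w k - (3 * T * k : ℝ)) - (w j - (3 * T * j : ℝ))‖ := by rw [hjk]; ring_nf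
        _ ≤ T + T := (norm_sub_le _ _).trans (add_le_add (hw k) (hw j))
    rw [← ofReal_sub, norm_real, Real.norm_eq_abs, ← mul_sub, abs_mul,
      abs_of_pos (by positivity)] at h
    have hlt : |((j : ℤ) - k : ℤ)| < (1 : ℝ) := by push_cast; nlinarith
    have := (Int.abs_lt_one_iff (a := j - k)).mp (by exact_mod_cast hlt)
    omega
  · linarith [norm_le_norm_sub_add (w k) ((3 * T * k : ℝ) : ℂ), hw k, hgrid k]

theorem le_countZeros_of_injective {f : ℂ → ℂ} (hf : Differentiable ℂ f) (hf₀ : f ≠ 0)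
    {w : ℕ → ℂ} (hw : Injective w) (hw₀ : ∀ k, f (w k) = 0) {a c R : ℝ} (ha : 0 < a)
    (hwn : ∀ k, ‖w k‖ ≤ a * k + c) (hR : c ≤ R) :
    (R - c) / a ≤ countZeros f {z | ‖z‖ ≤ R} := by
  set N := ⌊(R - c) / a⌋₊
  have hS : IsCompact {z : ℂ | ‖z‖ ≤ R} := by
    simpa [closedBall, dist_zero_right] using isCompact_closedBall (0 : ℂ) R
  calc (R - c) / a ≤ N + 1 := (Nat.lt_floor_add_one _).le
    _ = ((Finset.range (N + 1)).map ⟨w, hw⟩).card := by simp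
    _ ≤ countZeros f _ := card_le_countZeros hf hf₀ hS fun z hz => ?_
  obtain ⟨k, hk, rfl⟩ := Finset.mem_map.mp hz
  have hkN : (k : ℝ) ≤ (R - c) / a := (Nat.cast_le.mpr (Nat.lt_succ_iff.mp
    (Finset.mem_range.mp hk))).trans (Nat.floor_le (div_nonneg (by linarith) ha.le))
  rw [le_div_iff₀ ha] at hkN
  exact ⟨(hwn k).trans (by linarith), hw₀ k⟩

/-- an exponential polynomial `F(z) = Σ C_l e^{i b_l z}` with at least two terms
is not identically zero, has infinitely many zeros, and its zeros have positive asymptotic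
linear density. -/
theorem statement17 (ν : ℕ) (hν : 1 ≤ ν) (b : Fin (ν + 1) → ℝ) (hb : StrictMono b)
    (C : Fin (ν + 1) → ℂ) (hC : ∀ l, C l ≠ 0) :
    (∃ z : ℂ, (∑ l, C l * Complex.exp (Complex.I * (b l : ℂ) * z)) ≠ 0) ∧
    {z : ℂ | (∑ l, C l * Complex.exp (Complex.I * (b l : ℂ) * z)) = 0}.Infinite ∧
    ∃ c : ℝ, 0 < c ∧ ∃ R₀ : ℝ, 0 < R₀ ∧ ∀ R : ℝ, R₀ ≤ R →
      c * R ≤ countZeros (fun z => ∑ l, C l * Complex.exp (Complex.I * (b l : ℂ) * z))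
        {k : ℂ | ‖k‖ ≤ R} := by
  have hF₀ := expSum_ne_zero hb hC
  obtain ⟨T, hT, hnear⟩ := exists_expSum_eq_zero_near hν hb hC
  obtain ⟨w, hw, hw₀, hwn⟩ :=
    exists_injective_norm_le_of_forall_exists_near (Z := {z | expSum b C z = 0}) hT hnear
  refine ⟨Function.ne_iff.mp hF₀, infinite_of_injective_forall_mem hw hw₀,
    1 / (6 * T), by positivity, 2 * T, by positivity, fun R hR => ?_⟩
  calc 1 / (6 * T) * R ≤ (R - T) / (3 * T) := by
        rw [div_mul_eq_mul_div, one_mul, div_le_div_iff₀ (by positivity) (by positivity)]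
        nlinarith
    _ ≤ _ := le_countZeros_of_injective (differentiable_expSum b C) hF₀ hw hw₀ (by positivity)
        hwn (by linarith)
end
end
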